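/- For every ν ∈ ℂ and every m ∈ ℕ one has (−1)^m · (1/2 − ν)_m · (1/2 + ν)_m / m! = (1 − ν)_{2m} / m! + ∑_{r=1}^{2m} (−1)^r · (2m+2r)! / (4^r · (m+r)! · r!) · ∑_{α=0}^{2m−r} C(2m−α−1, r−1) · (1 − ν)_α / α!, where C(a,b) denotes the binomial coefficient a choose b. -/

import Mathlib

/-!
Put `a = -(m + 1/2)` and `b = 1 - ν`, and write rising factorials through the generalized
binomial coefficients of `ℂ`: `(x)_n = n! · multichoose x n`. Then the left side is
`(2m)!/m! · multichoose (a + b) (2m)`, the `r`-th coefficient is `(2m)!/m! · choose a r`, and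
`(1 - ν)_α / α! = multichoose b α`. After cancelling `(2m)!/m!` the identity is the
Chu–Vandermonde convolution `multichoose (a + b) n = ∑ multichoose a (n - α) · multichoose b α`,
in which each `multichoose a β = choose (a + (β - 1)) β` (`β ≥ 1`) is expanded by Vandermonde
once more as `∑ᵣ choose a r · C(β - 1, r - 1)`.
-/

open Finset Polynomial
open scoped Nat

theorem Polynomial.ascPochhammer_eval_eq_prod_range {S : Type*} [CommSemiring S] (n : ℕ) (s : S) :
    (ascPochhammer S n).eval s = ∏ i ∈ range n, (s + i) := by
  induction n with
  | zero => simp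
  | succ n ih => rw [ascPochhammer_succ_eval, ih, prod_range_succ]

theorem prod_range_sub_natCast_add_natCast {R : Type*} [CommRing R] (x : R) (n : ℕ) :
    ∏ i ∈ range n, (x - n + i) = (-1) ^ n * ∏ i ∈ range n, (1 - x + i) := by
  rw [← ascPochhammer_eval_eq_prod_range, ← ascPochhammer_eval_eq_prod_range, ← neg_sub,
    ascPochhammer_eval_neg_eq_descPochhammer, descPochhammer_eval_eq_ascPochhammer]
  congr 2
  ring

theorem prod_range_two_mul_sub_natCast_add_natCast {R : Type*} [CommRing R] (x : R) (n : ℕ) :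
    ∏ i ∈ range (2 * n), (x - n + i) =
      (-1) ^ n * (∏ i ∈ range n, (1 - x + i)) * ∏ i ∈ range n, (x + i) := by
  rw [two_mul, prod_range_add, prod_range_sub_natCast_add_natCast]
  refine congrArg _ (prod_congr rfl fun i _ => ?_)
  push_cast
  ring

theorem factorial_two_mul_add_two_mul_mul_factorial {K : Type*} [Field K] [CharZero K]
    (m r : ℕ) :
    ((2 * m + 2 * r)! : K) * m ! =
      (2 * m)! * 4 ^ r * (m + r)! * ∏ i ∈ range r, ((m : K) + 1 / 2 + i) := by
  induction r with
  | zero => simp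
  | succ r ih =>
    rw [show 2 * m + 2 * (r + 1) = 2 * m + 2 * r + 1 + 1 by ring, ← add_assoc,
      Nat.factorial_succ, Nat.factorial_succ, Nat.factorial_succ, prod_range_succ, pow_succ]
    push_cast
    linear_combination (2 * (m : K) + 2 * r + 1) * (2 * m + 2 * r + 2) * ih

namespace Ring

variable {R : Type*} [CommRing R] [BinomialRing R]

theorem factorial_mul_multichoose (r : R) (n : ℕ) :
    n ! * multichoose r n = ∏ i ∈ range n, (r + i) := by
  rw [← nsmul_eq_mul, factorial_nsmul_multichoose_eq_ascPochhammer, ascPochhammer_smeval_eq_eval,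
    ascPochhammer_eval_eq_prod_range]

theorem factorial_mul_choose_neg (r : R) (n : ℕ) :
    n ! * choose (-r) n = (-1) ^ n * ∏ i ∈ range n, (r + i) := by
  rw [choose_neg', Units.smul_def, Int.coe_negOnePow_natCast, zsmul_eq_mul,
    ← factorial_mul_multichoose]
  push_cast
  ring

theorem multichoose_eq_negOnePow_smul_choose (r : R) (n : ℕ) :
    multichoose r n = Int.negOnePow n • choose (-r) n := by
  rw [choose_neg', smul_smul, ← Int.negOnePow_add, Int.negOnePow_even _ (by simp), one_smul]

theorem multichoose_add (r s : R) (n : ℕ) :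
    multichoose (r + s) n = ∑ ij ∈ antidiagonal n, multichoose r ij.1 * multichoose s ij.2 := by
  rw [multichoose_eq_negOnePow_smul_choose, neg_add, add_choose_eq n (Commute.all _ _), smul_sum]
  refine sum_congr rfl fun ij hij => ?_
  rw [multichoose_eq_negOnePow_smul_choose, multichoose_eq_negOnePow_smul_choose,
    smul_mul_smul_comm, ← Int.negOnePow_add, ← mem_antidiagonal.mp hij, Nat.cast_add]

theorem multichoose_eq_sum_choose_mul_choose (r : R) {n : ℕ} (hn : n ≠ 0) :
    multichoose r n = ∑ k ∈ Icc 1 n, choose r k * ((n - 1).choose (k - 1) : R) := by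
  have hcast : r + n - 1 = r + ((n - 1 : ℕ) : R) := by
    rw [Nat.cast_sub (Nat.one_le_iff_ne_zero.mpr hn), Nat.cast_one, add_sub_assoc]
  rw [multichoose_eq, hcast, add_choose_eq n (Commute.all _ _),
    Nat.sum_antidiagonal_eq_sum_range_succ (fun i j => choose r i * choose ((n - 1 : ℕ) : R) j),
    range_eq_Ico, sum_eq_sum_Ico_succ_bot n.succ_pos, zero_add, Nat.succ_eq_add_one,
    Ico_add_one_right_eq_Icc]
  simp only [choose_natCast, Nat.sub_zero, Nat.cast_zero, mul_zero, zero_add,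
    Nat.choose_eq_zero_of_lt (Nat.sub_lt (Nat.pos_of_ne_zero hn) one_pos)]
  refine sum_congr rfl fun k hk => ?_
  rw [Nat.choose_symm_of_eq_add (b := k - 1) (by grind)]

theorem multichoose_add_eq_multichoose_add_sum (r s : R) (n : ℕ) :
    multichoose (r + s) n = multichoose s n + ∑ k ∈ Icc 1 n, choose r k *
      ∑ j ∈ range (n - k + 1), ((n - j - 1).choose (k - 1) : R) * multichoose s j := by
  have hswap : ∑ k ∈ Icc 1 n, choose r k *
      ∑ j ∈ range (n - k + 1), ((n - j - 1).choose (k - 1) : R) * multichoose s j =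
      ∑ j ∈ range n, multichoose r (n - j) * multichoose s j := by
    simp_rw [mul_sum]
    rw [sum_comm' (t' := range n) (s' := fun j => Icc 1 (n - j)) (by intro k j; simp; omega)]
    refine sum_congr rfl fun j hj => ?_
    rw [multichoose_eq_sum_choose_mul_choose r (by simp at hj; omega), sum_mul]
    refine sum_congr rfl fun k _ => ?_
    rw [Nat.sub_right_comm]
    ring
  rw [hswap, add_comm r, multichoose_add,
    Nat.sum_antidiagonal_eq_sum_range_succ (fun i j => multichoose s i * multichoose r j),
    sum_range_succ, Nat.sub_self, multichoose_zero_right, mul_one, add_comm]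
  simp_rw [mul_comm (multichoose s _)]

end Ring

open Ring

theorem stmt_16 (ν : ℂ) (m : ℕ) :
    (-1) ^ m * (∏ i ∈ Finset.range m, (1 / 2 - ν + i)) *
        (∏ i ∈ Finset.range m, (1 / 2 + ν + i)) / (m.factorial : ℂ) =
      (∏ i ∈ Finset.range (2 * m), (1 - ν + i)) / (m.factorial : ℂ) +
        ∑ r ∈ Finset.Icc 1 (2 * m),
          (-1) ^ r * ((2 * m + 2 * r).factorial : ℂ) /
              ((4 : ℂ) ^ r * ((m + r).factorial : ℂ) * (r.factorial : ℂ)) *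
            ∑ α ∈ Finset.range (2 * m - r + 1),
              ((2 * m - α - 1).choose (r - 1) : ℂ) *
                (∏ i ∈ Finset.range α, (1 - ν + i)) / (α.factorial : ℂ) := by
  have hlhs : (-1) ^ m * (∏ i ∈ range m, (1 / 2 - ν + i)) * ∏ i ∈ range m, (1 / 2 + ν + i) =
      (2 * m)! * multichoose (-(m + 1 / 2) + (1 - ν)) (2 * m) := by
    rw [factorial_mul_multichoose, show -(m + 1 / 2) + (1 - ν) = 1 / 2 - ν - m by ring,
      prod_range_two_mul_sub_natCast_add_natCast, show 1 - (1 / 2 - ν) = 1 / 2 + ν by ring]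
    ring
  have hcoef (r : ℕ) : (-1) ^ r * ((2 * m + 2 * r)! : ℂ) / (4 ^ r * (m + r)! * r !) =
      (2 * m)! / m ! * Ring.choose (-((m : ℂ) + 1 / 2)) r := by
    have hchoose := factorial_mul_choose_neg ((m : ℂ) + 1 / 2) r
    have hfact := factorial_two_mul_add_two_mul_mul_factorial (K := ℂ) m r
    generalize Ring.choose (-((m : ℂ) + 1 / 2)) r = c at hchoose ⊢
    field_simp [Nat.factorial_ne_zero]
    linear_combination (-1) ^ r * hfact - (2 * m)! * 4 ^ r * (m + r)! * hchoose
  have hterm (j : ℕ) : (∏ i ∈ range j, (1 - ν + i)) / j ! = multichoose (1 - ν) j := by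
    rw [← factorial_mul_multichoose, mul_div_cancel_left₀ _ (by simp [Nat.factorial_ne_zero])]
  simp_rw [hlhs, hcoef, mul_div_assoc, hterm, multichoose_add_eq_multichoose_add_sum,
    ← factorial_mul_multichoose]
  simp only [mul_assoc, ← mul_sum]
  ring
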